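/- (Probabilistic correctness of the intersection operation.) Let v, w : Fin N → ℝ≥0 be weighted sets, let i ∈ Fin N, and suppose N_W > 2 · |supp(v) ∪ supp(w)|. If the family H = (h_1,…,h_{N_D}) is drawn uniformly at random in the random-hash model, then the probability that CM_H(i, S_H(v) ⊙ S_H(w)) ≠ v i · w i is at most 1 / 2^{N_D}. -/

import Mathlib

/-
Only hash collisions with the other elements of `supp v ∪ supp w` can spoil a row: in a row
`j` where `i` collides with none of them, the entries of both sketches at `h_j(i)` are exactly
`v i` and `w i`, while every other row overestimates `v i * w i`. So an error forces a
collision in every row. For a single uniformly random hash the probability that `i` collides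
with one of at most `|supp v ∪ supp w|` other elements is, by the union bound, at most
`|supp v ∪ supp w| / N_W < 1 / 2`, and the rows are independent.
-/

open Finset

/-- The primitive sketch of a weighted set `v` under hash function `h`. -/
def sketch {N NW : ℕ} (h : Fin N → Fin NW) (v : Fin N → NNReal) : Fin NW → NNReal :=
  fun k => ∑ i ∈ Finset.univ.filter (fun i => h i = k), v i

/-- The support of a weighted set, as a finset. -/
noncomputable def supp {N : ℕ} (v : Fin N → NNReal) : Finset (Fin N) :=
  Finset.univ.filter (fun i => v i ≠ 0)

/-- The count-min sketch of `v` under the family `H`: the `j`-th row is the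
primitive sketch of `v` under `H j`. -/
def cmSketch {N NW ND : ℕ} (H : Fin ND → Fin N → Fin NW) (v : Fin N → NNReal) :
    Fin ND → Fin NW → NNReal :=
  fun j => sketch (H j) v

/-- The count-min lookup of `i` in an `ND × NW` matrix `M`, relative to the
family `H`: the minimum over `j` of `M[j, h_j(i)]`. -/
noncomputable def cmLookup {N NW ND : ℕ} (H : Fin ND → Fin N → Fin NW)
    (M : Fin ND → Fin NW → NNReal) (i : Fin N) : NNReal :=
  ⨅ j, M j (H j i)

section Sketch

variable {N NW : ℕ}

theorem le_sketch_apply (h : Fin N → Fin NW) (v : Fin N → NNReal) (i : Fin N) :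
    v i ≤ sketch h v (h i) :=
  single_le_sum (f := v) (fun _ _ => zero_le) (by simp)

theorem sketch_apply_eq_of_forall_mem_supp (h : Fin N → Fin NW) (v : Fin N → NNReal)
    (i : Fin N) (hi : ∀ i' ∈ (supp v).erase i, h i' ≠ h i) :
    sketch h v (h i) = v i := by
  refine sum_eq_single_of_mem i (by simp) fun i' hi' hne => ?_
  by_contra hv
  exact hi i' (by simp [supp, hne, hv]) (mem_filter.1 hi').2

theorem exists_collision_of_cmLookup_mul_ne {ND : ℕ} (H : Fin ND → Fin N → Fin NW)
    (v w : Fin N → NNReal) (i : Fin N)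
    (hne : cmLookup H (cmSketch H v * cmSketch H w) i ≠ v i * w i) (j : Fin ND) :
    ∃ i' ∈ (supp v ∪ supp w).erase i, H j i' = H j i := by
  by_contra! hj
  have hrow (u : Fin N → NNReal) (hu : supp u ⊆ supp v ∪ supp w) :
      sketch (H j) u (H j i) = u i :=
    sketch_apply_eq_of_forall_mem_supp _ _ _ fun i' hi' =>
      hj i' (erase_subset_erase i hu hi')
  refine hne (le_antisymm ?_ ?_)
  · calc cmLookup H (cmSketch H v * cmSketch H w) i
        ≤ sketch (H j) v (H j i) * sketch (H j) w (H j i) :=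
          ciInf_le (OrderBot.bddBelow _) j
      _ = v i * w i := by
          rw [hrow v subset_union_left, hrow w subset_union_right]
  · have : Nonempty (Fin ND) := ⟨j⟩
    exact le_ciInf fun j' =>
      mul_le_mul' (le_sketch_apply (H j') v i) (le_sketch_apply (H j') w i)

end Sketch

section Counting

variable {α β : Type*} [Fintype α] [DecidableEq α] [Fintype β] [DecidableEq β]

def subtypeApplyEqApplyEquiv {a b : α} (hab : a ≠ b) :
    {h : α → β // h a = h b} ≃ ({x // x ≠ a} → β) where
  toFun h x := h.1 x
  invFun g := ⟨fun x => if hx : x = a then g ⟨b, hab.symm⟩ else g ⟨x, hx⟩, by simp [hab.symm]⟩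
  left_inv h := by
    ext x
    by_cases hx : x = a
    · subst hx; simp [h.2]
    · simp [hx]
  right_inv g := by
    ext ⟨x, hx⟩
    simp [hx]

theorem card_filter_apply_eq_apply_mul_card {a b : α} (hab : a ≠ b) :
    #{h : α → β | h a = h b} * Fintype.card β = Fintype.card (α → β) := by
  rw [← Fintype.card_subtype, Fintype.card_congr (subtypeApplyEqApplyEquiv hab),
    Fintype.card_congr (Equiv.funSplitAt a β), Fintype.card_prod, mul_comm]

def collisionSet (S : Finset α) (b : α) : Finset (α → β) := {h | ∃ a ∈ S, h a = h b}

@[simp]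
theorem mem_collisionSet {S : Finset α} {b : α} {h : α → β} :
    h ∈ collisionSet S b ↔ ∃ a ∈ S, h a = h b := by
  simp [collisionSet]

theorem card_collisionSet_mul_card_le {S : Finset α} {b : α} (hb : b ∉ S) :
    #(collisionSet S b : Finset (α → β)) * Fintype.card β ≤ #S * Fintype.card (α → β) := by
  have hunion : (collisionSet S b : Finset (α → β)) =
      S.biUnion fun a => {h : α → β | h a = h b} := by
    ext h; simp
  calc #(collisionSet S b : Finset (α → β)) * Fintype.card β
      ≤ (∑ a ∈ S, #{h : α → β | h a = h b}) * Fintype.card β := by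
        rw [hunion]; gcongr; exact card_biUnion_le
    _ = #S * Fintype.card (α → β) := by
        rw [sum_mul, sum_congr rfl fun a ha => card_filter_apply_eq_apply_mul_card
          (ne_of_mem_of_not_mem ha hb), sum_const, smul_eq_mul]

theorem two_mul_card_collisionSet_le {S : Finset α} {b : α} (hb : b ∉ S)
    (hS : 2 * #S < Fintype.card β) :
    2 * #(collisionSet S b : Finset (α → β)) ≤ Fintype.card (α → β) := by
  refine le_of_mul_le_mul_right ?_ (pos_of_gt hS)
  calc 2 * #(collisionSet S b : Finset (α → β)) * Fintype.card β
      ≤ 2 * #S * Fintype.card (α → β) := by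
        rw [mul_assoc, mul_assoc]
        exact Nat.mul_le_mul_left 2 (card_collisionSet_mul_card_le hb)
    _ ≤ Fintype.card (α → β) * Fintype.card β := by
        rw [mul_comm]; gcongr

end Counting

theorem prob_cmLookup_hadamard_err_le_general
    {N NW ND : ℕ}
    (v w : Fin N → NNReal) (i : Fin N)
    (hW : 2 * (supp v ∪ supp w).card < NW) :
    ((Finset.univ.filter (fun H : Fin ND → Fin N → Fin NW =>
        cmLookup H (cmSketch H v * cmSketch H w) i ≠ v i * w i)).card : ℝ)
      / (Fintype.card (Fin ND → Fin N → Fin NW) : ℝ)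
      ≤ 1 / 2 ^ ND := by
  set bad : Finset (Fin N → Fin NW) := collisionSet ((supp v ∪ supp w).erase i) i
  have hsub : (Finset.univ.filter fun H : Fin ND → Fin N → Fin NW =>
      cmLookup H (cmSketch H v * cmSketch H w) i ≠ v i * w i) ⊆
      Fintype.piFinset fun _ => bad := fun H hH =>
    Fintype.mem_piFinset.2 fun j => by
      simpa [bad] using exists_collision_of_cmLookup_mul_ne H v w i (mem_filter.1 hH).2 j
  have hbad : 2 * #bad ≤ Fintype.card (Fin N → Fin NW) :=
    two_mul_card_collisionSet_le (notMem_erase i _)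
      (by simpa using (Nat.mul_le_mul_left 2 card_erase_le).trans_lt hW)
  have hcount : #(Finset.univ.filter fun H : Fin ND → Fin N → Fin NW =>
      cmLookup H (cmSketch H v * cmSketch H w) i ≠ v i * w i) * 2 ^ ND ≤
      Fintype.card (Fin ND → Fin N → Fin NW) :=
    calc _ ≤ #bad ^ ND * 2 ^ ND := by
          gcongr; simpa using card_le_card hsub
      _ = (2 * #bad) ^ ND := by rw [mul_pow, mul_comm]
      _ ≤ Fintype.card (Fin ND → Fin N → Fin NW) := by
          rw [Fintype.card_fun (α := Fin ND), Fintype.card_fin]; gcongr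
  have : Nonempty (Fin NW) := ⟨⟨0, pos_of_gt hW⟩⟩
  rw [div_le_div_iff₀ (by exact_mod_cast Fintype.card_pos) (by positivity), one_mul]
  exact_mod_cast hcount

/-- Probabilistic correctness of the intersection operation: if
`NW > 2 * |supp v ∪ supp w|` and the family `H` is drawn uniformly at random,
the probability that `CM_H(i, S_H(v) ⊙ S_H(w)) ≠ v i * w i` is at most
`1 / 2 ^ ND`. -/
theorem prob_cmLookup_hadamard_err_le
    {N NW ND : ℕ} (hN : 0 < N) (hNW : 0 < NW) (hND : 0 < ND)
    (v w : Fin N → NNReal) (i : Fin N)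
    (hW : 2 * (supp v ∪ supp w).card < NW) :
    ((Finset.univ.filter (fun H : Fin ND → Fin N → Fin NW =>
        cmLookup H (cmSketch H v * cmSketch H w) i ≠ v i * w i)).card : ℝ)
      / (Fintype.card (Fin ND → Fin N → Fin NW) : ℝ)
      ≤ 1 / 2 ^ ND :=
  prob_cmLookup_hadamard_err_le_general v w i hW
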